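/- arXiv:2506.17803 — 5 statements merged into one kernel-verified Lean document; each statement's English description precedes it below -/
import Mathlib

section
/- For every channel with state (N, P_S) on finite alphabets X, Y, S and every M ∈ ℕ, the supremum of η(Z) over all NS-assisted coding schemes Z with message set {1,...,M} for (N, P_S) equals the supremum of η(Z̄) over all NS-assisted coding schemes Z̄ with message set {1,...,M} for the CSIR-augmented channel (N̄, P_S). -/
open scoped BigOperators Classical
open Finset Filter

noncomputable section

/-- A probability mass function on a finite alphabet. -/
def IsPMF {A : Type*} [Fintype A] (p : A → ℝ) : Prop :=
  (∀ a, 0 ≤ p a) ∧ ∑ a, p a = 1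

/-- A channel-with-state kernel `N(y|x,s)`. -/
def IsStateKernel {X S Y : Type*} [Fintype Y] (N : X → S → Y → ℝ) : Prop :=
  (∀ x s y, 0 ≤ N x s y) ∧ ∀ x s, ∑ y, N x s y = 1

/-- Bipartite non-signaling box: party 1 has input `a1`, output `b1`;
party 2 has input `a2`, output `b2`. -/
def IsNSBox {A1 A2 B1 B2 : Type*} [Fintype B1] [Fintype B2]
    (Z : A1 → A2 → B1 → B2 → ℝ) : Prop :=
  (∀ a1 a2 b1 b2, 0 ≤ Z a1 a2 b1 b2) ∧
  (∀ a1 a2, ∑ b1, ∑ b2, Z a1 a2 b1 b2 = 1) ∧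
  (∀ a1 a2 a2' b1, ∑ b2, Z a1 a2 b1 b2 = ∑ b2, Z a1 a2' b1 b2) ∧
  (∀ a1 a1' a2 b2, ∑ b1, Z a1 a2 b1 b2 = ∑ b1, Z a1' a2 b1 b2)

/-- Success probability of an NS-assisted coding scheme `Z(x, ŵ | (w,s), y)`
over the channel with state `(N, PS)`, with message set `Fin M`. -/
def etaCWS {X S Y : Type*} [Fintype X] [Fintype S] [Fintype Y] (M : ℕ)
    (N : X → S → Y → ℝ) (PS : S → ℝ)
    (Z : (Fin M × S) → Y → X → Fin M → ℝ) : ℝ :=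
  (M : ℝ)⁻¹ * ∑ w, ∑ s, ∑ x, ∑ y, PS s * N x s y * Z (w, s) y x w

/-- The CSIR-augmented channel `N̄((y,s_R)|x,s) = N(y|x,s)·𝟙(s_R = s)`. -/
def Nbar {X S Y : Type*} (N : X → S → Y → ℝ) : X → S → (Y × S) → ℝ :=
  fun x s p => if p.2 = s then N x s p.1 else 0

/-!
A scheme for `(N, PS)` becomes a scheme for `(N̄, PS)` by letting the receiver ignore the extra
state output. Conversely, a scheme `Z̄` for `(N̄, PS)` is first averaged over the cyclic shifts
`(w, ŵ) ↦ (w + c, ŵ + c)` of the messages; this keeps the success probability and makes the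
receiver's output marginal uniform. The receiver's output then carries no information about its
input, so the transmitter may feed the state it knows into the receiver's input `(y, s)` without
breaking non-signaling, and the resulting box for `(N, PS)` has the same success probability.
-/

section NSBox

variable {A1 A2 A2' B1 B2 : Type*} [Fintype B1] [Fintype B2]

lemma isNSBox_of_isEmpty [IsEmpty A1] (Z : A1 → A2 → B1 → B2 → ℝ) : IsNSBox Z :=
  ⟨fun a1 => isEmptyElim a1, fun a1 => isEmptyElim a1, fun a1 => isEmptyElim a1,
    fun a1 => isEmptyElim a1⟩

lemma IsNSBox.comp_right {Z : A1 → A2 → B1 → B2 → ℝ} (hZ : IsNSBox Z) (f : A2' → A2) :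
    IsNSBox fun a1 a2 => Z a1 (f a2) := by
  obtain ⟨h0, h1, h2, h3⟩ := hZ
  exact ⟨fun _ _ => h0 _ _, fun _ _ => h1 _ _, fun a1 _ _ => h2 a1 _ _, fun _ _ _ => h3 _ _ _⟩

lemma IsNSBox.comp_right_of_marginal_indep {Z : A1 → A2 → B1 → B2 → ℝ} (hZ : IsNSBox Z)
    (hR : ∀ a1 a2 a2' b2, ∑ b1, Z a1 a2 b1 b2 = ∑ b1, Z a1 a2' b1 b2) (g : A1 → A2' → A2) :
    IsNSBox fun a1 a2 => Z a1 (g a1 a2) := by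
  obtain ⟨h0, h1, h2, h3⟩ := hZ
  exact ⟨fun _ _ => h0 _ _, fun _ _ => h1 _ _, fun a1 _ _ => h2 a1 _ _,
    fun a1 a1' a2 b2 => (hR a1 _ (g a1' a2) b2).trans (h3 a1 a1' _ b2)⟩

end NSBox

section ShiftSymm

variable {G T A2 B1 : Type*} [AddGroup G] [Fintype G]

def shiftSymm (Z : G × T → A2 → B1 → G → ℝ) : G × T → A2 → B1 → G → ℝ :=
  fun a1 a2 b1 b2 => (Fintype.card G : ℝ)⁻¹ * ∑ c, Z (a1.1 + c, a1.2) a2 b1 (b2 + c)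

variable {Z : G × T → A2 → B1 → G → ℝ}

lemma sum_shiftSymm_right (a1 : G × T) (a2 : A2) (b1 : B1) :
    ∑ b2, shiftSymm Z a1 a2 b1 b2
      = (Fintype.card G : ℝ)⁻¹ * ∑ c, ∑ b2, Z (a1.1 + c, a1.2) a2 b1 b2 := by
  simp only [shiftSymm, ← Finset.mul_sum]
  rw [Finset.sum_comm]
  congr 1
  exact Finset.sum_congr rfl fun c _ => Equiv.sum_comp (Equiv.addRight c) _

lemma sum_shiftSymm_left [Fintype B1] (hZ : IsNSBox Z) (a1 : G × T) (a2 : A2) (b2 : G) :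
    ∑ b1, shiftSymm Z a1 a2 b1 b2 = (Fintype.card G : ℝ)⁻¹ := by
  obtain ⟨-, h1, -, h3⟩ := hZ
  calc ∑ b1, shiftSymm Z a1 a2 b1 b2
      = (Fintype.card G : ℝ)⁻¹ * ∑ c, ∑ b1, Z (a1.1 + c, a1.2) a2 b1 (b2 + c) := by
        simp only [shiftSymm, ← Finset.mul_sum]
        rw [Finset.sum_comm]
    _ = (Fintype.card G : ℝ)⁻¹ * ∑ b1, ∑ c, Z a1 a2 b1 (b2 + c) := by
        rw [Finset.sum_congr rfl fun c _ => h3 (a1.1 + c, a1.2) a1 a2 (b2 + c), Finset.sum_comm]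
    _ = (Fintype.card G : ℝ)⁻¹ * ∑ b1, ∑ b2, Z a1 a2 b1 b2 := by
        congr 1
        exact Finset.sum_congr rfl fun b1 _ => Equiv.sum_comp (Equiv.addLeft b2) (Z a1 a2 b1)
    _ = (Fintype.card G : ℝ)⁻¹ := by rw [h1, mul_one]

lemma sum_shiftSymm_diag (t : T) (a2 : A2) (b1 : B1) :
    ∑ g, shiftSymm Z (g, t) a2 b1 g = ∑ g, Z (g, t) a2 b1 g := by
  have hG : (Fintype.card G : ℝ) ≠ 0 := Nat.cast_ne_zero.mpr Fintype.card_ne_zero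
  calc ∑ g, shiftSymm Z (g, t) a2 b1 g
      = (Fintype.card G : ℝ)⁻¹ * ∑ c, ∑ g, Z (g + c, t) a2 b1 (g + c) := by
        simp only [shiftSymm, ← Finset.mul_sum]
        rw [Finset.sum_comm]
    _ = (Fintype.card G : ℝ)⁻¹ * ∑ _c : G, ∑ g, Z (g, t) a2 b1 g := by
        congr 1
        exact Finset.sum_congr rfl fun c _ =>
          Equiv.sum_comp (Equiv.addRight c) fun g => Z (g, t) a2 b1 g
    _ = ∑ g, Z (g, t) a2 b1 g := by
        rw [Finset.sum_const, Finset.card_univ, nsmul_eq_mul, inv_mul_cancel_left₀ hG]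

lemma IsNSBox.shiftSymm [Fintype B1] (hZ : IsNSBox Z) : IsNSBox (shiftSymm Z) := by
  have hG : (Fintype.card G : ℝ) ≠ 0 := Nat.cast_ne_zero.mpr Fintype.card_ne_zero
  refine ⟨fun _ _ _ _ => mul_nonneg (by positivity) (Finset.sum_nonneg fun _ _ => hZ.1 _ _ _ _),
    fun a1 a2 => ?_, fun a1 a2 a2' b1 => ?_, fun a1 a1' a2 b2 => ?_⟩
  · rw [Finset.sum_comm]
    simp [sum_shiftSymm_left hZ, hG]
  · simp only [sum_shiftSymm_right, hZ.2.2.1 _ a2 a2']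
  · rw [sum_shiftSymm_left hZ, sum_shiftSymm_left hZ]

end ShiftSymm

section SuccessProbability

variable {X S Y : Type*} [Fintype X] [Fintype S] [Fintype Y] {M : ℕ}

lemma etaCWS_eq_sum_mul_sum_msg (N : X → S → Y → ℝ) (PS : S → ℝ)
    (Z : (Fin M × S) → Y → X → Fin M → ℝ) :
    etaCWS M N PS Z = (M : ℝ)⁻¹ * ∑ s, ∑ x, ∑ y, PS s * N x s y * ∑ w, Z (w, s) y x w := by
  simp only [etaCWS, Finset.mul_sum]
  rw [Finset.sum_comm]
  refine Finset.sum_congr rfl fun s _ => ?_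
  rw [Finset.sum_comm]
  exact Finset.sum_congr rfl fun x _ => Finset.sum_comm

lemma etaCWS_shiftSymm [NeZero M] (N : X → S → Y → ℝ) (PS : S → ℝ)
    (Z : (Fin M × S) → Y → X → Fin M → ℝ) :
    etaCWS M N PS (shiftSymm Z) = etaCWS M N PS Z := by
  simp only [etaCWS_eq_sum_mul_sum_msg, sum_shiftSymm_diag]

lemma etaCWS_Nbar (N : X → S → Y → ℝ) (PS : S → ℝ)
    (Z : (Fin M × S) → (Y × S) → X → Fin M → ℝ) :
    etaCWS M (Nbar N) PS Z = etaCWS M N PS fun a1 y => Z a1 (y, a1.2) := by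
  unfold etaCWS
  congr 1
  refine Finset.sum_congr rfl fun w _ => Finset.sum_congr rfl fun s _ =>
    Finset.sum_congr rfl fun x _ => ?_
  rw [Fintype.sum_prod_type, Finset.sum_congr rfl fun y _ => Finset.sum_eq_single_of_mem s
    (Finset.mem_univ s) fun s' _ hs' => by simp [Nbar, hs']]
  simp [Nbar]

lemma exists_isNSBox_etaCWS_eq_etaCWS_Nbar (N : X → S → Y → ℝ) (PS : S → ℝ)
    {Z : (Fin M × S) → (Y × S) → X → Fin M → ℝ} (hZ : IsNSBox Z) :
    ∃ Z' : (Fin M × S) → Y → X → Fin M → ℝ,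
      IsNSBox Z' ∧ etaCWS M N PS Z' = etaCWS M (Nbar N) PS Z := by
  rcases eq_zero_or_neZero M with rfl | _
  · exact ⟨_, isNSBox_of_isEmpty _, (etaCWS_Nbar N PS Z).symm⟩
  · refine ⟨_, hZ.shiftSymm.comp_right_of_marginal_indep (fun a1 a2 a2' b2 => ?_)
      fun a1 y => (y, a1.2), ?_⟩
    · rw [sum_shiftSymm_left hZ, sum_shiftSymm_left hZ]
    · rw [← etaCWS_Nbar, etaCWS_shiftSymm]

end SuccessProbability

theorem stmt0_general {X S Y : Type*} [Fintype X] [Fintype S] [Fintype Y]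
    (N : X → S → Y → ℝ) (PS : S → ℝ) (M : ℕ) :
    sSup {e : ℝ | ∃ Z : (Fin M × S) → Y → X → Fin M → ℝ,
        IsNSBox Z ∧ e = etaCWS M N PS Z} =
    sSup {e : ℝ | ∃ Z : (Fin M × S) → (Y × S) → X → Fin M → ℝ,
        IsNSBox Z ∧ e = etaCWS M (Nbar N) PS Z} := by
  congr 1
  ext e
  constructor
  · rintro ⟨Z, hZ, rfl⟩
    exact ⟨_, hZ.comp_right Prod.fst, (etaCWS_Nbar N PS fun a1 p => Z a1 p.1).symm⟩
  · rintro ⟨Z, hZ, rfl⟩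
    obtain ⟨Z', hZ', heta⟩ := exists_isNSBox_etaCWS_eq_etaCWS_Nbar N PS hZ
    exact ⟨Z', hZ', heta.symm⟩

/-- Virtual signaling of CSIT, finite blocklength: the supremum of the
success probability over NS-assisted coding schemes for `(N, PS)` equals the supremum over
NS-assisted coding schemes for the CSIR-augmented channel `(N̄, PS)`. -/
theorem stmt0 {X S Y : Type*} [Fintype X] [Fintype S] [Fintype Y]
    (N : X → S → Y → ℝ) (hN : IsStateKernel N) (PS : S → ℝ) (hPS : IsPMF PS) (M : ℕ) :
    sSup {e : ℝ | ∃ Z : (Fin M × S) → Y → X → Fin M → ℝ,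
        IsNSBox Z ∧ e = etaCWS M N PS Z} =
    sSup {e : ℝ | ∃ Z : (Fin M × S) → (Y × S) → X → Fin M → ℝ,
        IsNSBox Z ∧ e = etaCWS M (Nbar N) PS Z} :=
  stmt0_general N PS M
end
end

section
/- Consider a K-user broadcast channel N(y1,...,yK|x) with message sets {1,...,M_k} and side-information sets W_k ⊆ [K]\{k} for k ∈ [K], and fully ((K+1)-partite) NS-assisted coding schemes. If k ∈ [K] is such that k ∉ W_1 ∪ W_2 ∪ ... ∪ W_K, then the optimal joint success probability is unchanged when user k's side information is removed: η*_NS(SI = [K]) = η*_NS(SI = [K]\{k}). -/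
open scoped BigOperators Classical
open Finset Filter

noncomputable section

/-- A `K`-user broadcast channel kernel `N(y_1,…,y_K|x)`. -/
def IsKUserKernel {K : ℕ} {X : Type} {Y : Fin K → Type} [∀ k, Fintype (Y k)]
    (N : X → (∀ k, Y k) → ℝ) : Prop :=
  (∀ x y, 0 ≤ N x y) ∧ ∀ x, ∑ y : ∀ k, Y k, N x y = 1

/-- A multipartite non-signaling box over an index set `I` of parties, with input
alphabets `A i` and output alphabets `B i`: for every subset `T` of the parties, the
marginal obtained by summing over the outputs of the parties not in `T` is unchanged
when the inputs of the parties not in `T` are altered. -/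
def IsNSBoxFam {I : Type} [Fintype I] [DecidableEq I] {A B : I → Type}
    [∀ i, Fintype (A i)] [∀ i, Fintype (B i)]
    (Z : (∀ i, A i) → (∀ i, B i) → ℝ) : Prop :=
  (∀ a b, 0 ≤ Z a b) ∧
  (∀ a, ∑ b, Z a b = 1) ∧
  ∀ (T : Finset I) (a a' : ∀ i, A i), (∀ i ∈ T, a i = a' i) →
    ∀ bT : ∀ i, B i,
      ∑ b ∈ Finset.univ.filter (fun b : ∀ i, B i => ∀ i ∈ T, b i = bT i), Z a b =
      ∑ b ∈ Finset.univ.filter (fun b : ∀ i, B i => ∀ i ∈ T, b i = bT i), Z a' b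

variable {K : ℕ}

/-- The side-information alphabet of user `k` when the active side-information set is
`𝒦`: it is `S_k = Π_{j ∈ W k} {1,…,M_j}` if `k ∈ 𝒦` and (essentially) trivial
otherwise. -/
def SideInfo (M : Fin K → ℕ) (W : Fin K → Finset (Fin K)) (𝒦 : Finset (Fin K))
    (k : Fin K) : Type :=
  ∀ j : {j : Fin K // j ∈ W k ∧ k ∈ 𝒦}, Fin (M j.1)

instance (M : Fin K → ℕ) (W : Fin K → Finset (Fin K)) (𝒦 : Finset (Fin K)) (k : Fin K) :
    Fintype (SideInfo M W 𝒦 k) := by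
  unfold SideInfo; infer_instance

/-- Input alphabets of the `K+1` parties (`none` = transmitter, `some k` = user `k`). -/
def InA (X : Type) (Y : Fin K → Type) (M : Fin K → ℕ) (W : Fin K → Finset (Fin K))
    (𝒦 : Finset (Fin K)) : Option (Fin K) → Type
  | none => ∀ k, Fin (M k)
  | some k => Y k × SideInfo M W 𝒦 k

instance (X : Type) (Y : Fin K → Type) [∀ k, Fintype (Y k)] (M : Fin K → ℕ)
    (W : Fin K → Finset (Fin K)) (𝒦 : Finset (Fin K)) (i : Option (Fin K)) :
    Fintype (InA X Y M W 𝒦 i) := by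
  cases i with
  | none => exact (inferInstance : Fintype (∀ k, Fin (M k)))
  | some k => exact (inferInstance : Fintype (Y k × SideInfo M W 𝒦 k))

/-- Output alphabets of the `K+1` parties. -/
def OutA (X : Type) (M : Fin K → ℕ) : Option (Fin K) → Type
  | none => X
  | some k => Fin (M k)

instance (X : Type) [Fintype X] (M : Fin K → ℕ) (i : Option (Fin K)) :
    Fintype (OutA X M i) := by
  cases i with
  | none => exact (inferInstance : Fintype X)
  | some k => exact (inferInstance : Fintype (Fin (M k)))

/-- The tuple of inputs fed to the box when the messages are `w` and the channel
outputs are `y`: the transmitter inputs `w`, and user `k` inputs `y k` together with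
its available side information `(w_j)_{j ∈ W k}`. -/
def mkIn {X : Type} {Y : Fin K → Type} {M : Fin K → ℕ} {W : Fin K → Finset (Fin K)}
    {𝒦 : Finset (Fin K)} (w : ∀ k, Fin (M k)) (y : ∀ k, Y k) :
    ∀ i, InA X Y M W 𝒦 i
  | none => w
  | some k => (y k, fun j => w j.1)

/-- The tuple of outputs corresponding to the channel input `x` and correct decoding
of all messages `w`. -/
def mkOut {X : Type} {M : Fin K → ℕ} (x : X) (w : ∀ k, Fin (M k)) :
    ∀ i, OutA X M i
  | none => x
  | some k => w k

/-- Joint success probability of a fully NS-assisted coding scheme with side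
information at the users in `𝒦`. -/
def etaK {X : Type} [Fintype X] {Y : Fin K → Type} [∀ k, Fintype (Y k)]
    (M : Fin K → ℕ) (W : Fin K → Finset (Fin K)) (𝒦 : Finset (Fin K))
    (N : X → (∀ k, Y k) → ℝ)
    (Z : (∀ i, InA X Y M W 𝒦 i) → (∀ i, OutA X M i) → ℝ) : ℝ :=
  (∏ k, (M k : ℝ))⁻¹ * ∑ w : ∀ k, Fin (M k), ∑ x : X, ∑ y : ∀ k, Y k,
    N x y * Z (mkIn w y) (mkOut x w)

/-- `η*_NS(SI = 𝒦)`: the optimal joint success probability over fully NS-assisted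
coding schemes with side information available to the users in `𝒦`. -/
def etaStarK (X : Type) [Fintype X] (Y : Fin K → Type) [∀ k, Fintype (Y k)]
    (M : Fin K → ℕ) (W : Fin K → Finset (Fin K)) (N : X → (∀ k, Y k) → ℝ)
    (𝒦 : Finset (Fin K)) : ℝ :=
  sSup {e : ℝ | ∃ Z : (∀ i, InA X Y M W 𝒦 i) → (∀ i, OutA X M i) → ℝ,
    IsNSBoxFam Z ∧ e = etaK M W 𝒦 N Z}


/-! The transmitter shares a uniformly random key `r ∈ ℤ/M_k` with user `k` inside the box:
it feeds the box the shifted message `w_k + r`, hands user `k` the side information it would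
otherwise lack directly from its own input, and user `k` subtracts `r` from its output. On the
channel's inputs the decoding is unchanged, because no user sees `w_k` as side information.
Any group of parties not containing the transmitter sees user `k`'s output one-time padded,
hence uniform and independent of the others, so the averaged box is again non-signaling. The
converse inequality is immediate: a user can always ignore its side information. -/

section NonSignaling

variable {I : Type} [DecidableEq I] {B : I → Type}

def piPermAt (u : I) (e : Equiv.Perm (B u)) : Equiv.Perm (∀ i, B i) :=
  Equiv.piCongrRight (Function.update (fun i => Equiv.refl (B i)) u e)

@[simp]
lemma piPermAt_apply_self (u : I) (e : Equiv.Perm (B u)) (b : ∀ i, B i) :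
    piPermAt u e b u = e (b u) := by
  simp [piPermAt]

@[simp]
lemma piPermAt_apply_of_ne {u i : I} (h : i ≠ u) (e : Equiv.Perm (B u)) (b : ∀ i, B i) :
    piPermAt u e b i = b i := by
  simp [piPermAt, h]

variable [Fintype I] [∀ i, Fintype (B i)] {A A' : I → Type}

def marginal (Z : (∀ i, A i) → (∀ i, B i) → ℝ) (T : Finset I) (a : ∀ i, A i)
    (bT : ∀ i, B i) : ℝ :=
  ∑ b ∈ univ.filter (fun b : ∀ i, B i => ∀ i ∈ T, b i = bT i), Z a b

lemma marginal_comp_piPermAt (Z : (∀ i, A i) → (∀ i, B i) → ℝ) (u : I)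
    (e : Equiv.Perm (B u)) (T : Finset I) (a : ∀ i, A i) (bT : ∀ i, B i) :
    marginal (fun a b => Z a (piPermAt u e b)) T a bT = marginal Z T a (piPermAt u e bT) := by
  simp only [marginal, sum_filter]
  refine Fintype.sum_equiv (piPermAt u e) _ _ fun b =>
    if_congr (forall₂_congr fun i _ => ?_) rfl rfl
  exact (Equiv.apply_eq_iff_eq _).symm

lemma sum_marginal_piPermAt {G : Type} [Fintype G] (Z : (∀ i, A i) → (∀ i, B i) → ℝ)
    (a : ∀ i, A i) {u : I} {T : Finset I} (hu : u ∈ T) (shift : G → Equiv.Perm (B u))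
    (hshift : ∀ x, Function.Bijective fun r => shift r x) (bT : ∀ i, B i) :
    ∑ r, marginal Z T a (piPermAt u (shift r) bT) = marginal Z (T.erase u) a bT := by
  simp only [marginal, sum_filter]
  rw [sum_comm]
  refine sum_congr rfl fun b _ => ?_
  have split : ∀ r, (∀ i ∈ T, b i = piPermAt u (shift r) bT i) ↔
      (shift r (bT u) = b u ∧ ∀ i ∈ T.erase u, b i = bT i) := fun r => by
    constructor
    · intro h
      refine ⟨by simpa using (h u hu).symm, fun i hi => ?_⟩
      simpa [ne_of_mem_erase hi] using h i (mem_of_mem_erase hi)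
    · rintro ⟨hbu, h⟩ i hi
      by_cases hiu : i = u
      · subst hiu
        simpa using hbu.symm
      · simpa [hiu] using h i (mem_erase.2 ⟨hiu, hi⟩)
  simp only [split, ite_and]
  rw [Fintype.sum_bijective _ (hshift (bT u)) _
    (fun x => if x = b u then (if ∀ i ∈ T.erase u, b i = bT i then Z a b else 0) else 0)
    fun _ => rfl]
  simp

variable [∀ i, Fintype (A i)] [∀ i, Fintype (A' i)]

theorem IsNSBoxFam.comp_input {Z : (∀ i, A i) → (∀ i, B i) → ℝ} (hZ : IsNSBoxFam Z)
    (f : (∀ i, A' i) → ∀ i, A i)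
    (hf : ∀ (T : Finset I) a a', (∀ i ∈ T, a i = a' i) → ∀ i ∈ T, f a i = f a' i) :
    IsNSBoxFam fun a b => Z (f a) b :=
  ⟨fun _ b => hZ.1 _ b, fun _ => hZ.2.1 _, fun T a a' h => hZ.2.2 T _ _ (hf T a a' h)⟩

variable {G : Type} [Fintype G]

def twirl (F : G → (∀ i, A' i) → ∀ i, A i) (u : I) (shift : G → Equiv.Perm (B u))
    (Z : (∀ i, A i) → (∀ i, B i) → ℝ) : (∀ i, A' i) → (∀ i, B i) → ℝ :=
  fun a b => (Fintype.card G : ℝ)⁻¹ * ∑ r, Z (F r a) (piPermAt u (shift r) b)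

/-- `hF` lets `F` route party `t`'s input to party `u`, and `hF_key` lets only `t` see the key;
both are harmless because `u`'s output is padded with the same key. -/
theorem isNSBoxFam_twirl [Nonempty G] {Z : (∀ i, A i) → (∀ i, B i) → ℝ} (hZ : IsNSBoxFam Z)
    {F : G → (∀ i, A' i) → ∀ i, A i} {t u : I}
    (hF : ∀ r (T : Finset I) a a', (t ∈ T ∨ u ∉ T) → (∀ i ∈ T, a i = a' i) →
      ∀ i ∈ T, F r a i = F r a' i)
    (hF_key : ∀ r r' a i, i ≠ t → F r a i = F r' a i)
    {shift : G → Equiv.Perm (B u)} (hshift : ∀ x, Function.Bijective fun r => shift r x) :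
    IsNSBoxFam (twirl F u shift Z) := by
  obtain ⟨hZ_nonneg, hZ_sum, hZ_ns⟩ := hZ
  have hG : (0 : ℝ) < Fintype.card G := by exact_mod_cast Fintype.card_pos
  have marginal_twirl : ∀ T a bT, marginal (twirl F u shift Z) T a bT =
      (Fintype.card G : ℝ)⁻¹ * ∑ r, marginal Z T (F r a) (piPermAt u (shift r) bT) := by
    intro T a bT
    simp only [marginal, twirl, ← mul_sum]
    rw [sum_comm]
    exact congrArg _ (sum_congr rfl fun r _ => marginal_comp_piPermAt Z u (shift r) T (F r a) bT)
  refine ⟨fun a b => mul_nonneg (inv_nonneg.2 hG.le) (sum_nonneg fun r _ => hZ_nonneg _ _),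
    fun a => ?_, fun T a a' h bT => ?_⟩
  · simp only [twirl, ← mul_sum]
    rw [sum_comm]
    simp only [Equiv.sum_comp (piPermAt u (shift _)) (Z (F _ a)), hZ_sum, sum_const,
      card_univ, nsmul_one]
    exact inv_mul_cancel₀ hG.ne'
  change marginal _ T a bT = marginal _ T a' bT
  rw [marginal_twirl, marginal_twirl]
  congr 1
  by_cases hT : t ∈ T ∨ u ∉ T
  · exact sum_congr rfl fun r _ => hZ_ns T _ _ (hF r T a a' hT h) _
  obtain ⟨htT, huT⟩ : t ∉ T ∧ u ∈ T := by simpa using hT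
  obtain ⟨r₀⟩ := ‹Nonempty G›
  have forget_key : ∀ a, ∑ r, marginal Z T (F r a) (piPermAt u (shift r) bT) =
      marginal Z (T.erase u) (F r₀ a) bT := fun a => by
    rw [← sum_marginal_piPermAt Z (F r₀ a) huT shift hshift bT]
    exact sum_congr rfl fun r _ =>
      hZ_ns T _ _ (fun i hi => hF_key r r₀ a i (ne_of_mem_of_not_mem hi htT)) _
  rw [forget_key, forget_key]
  exact hZ_ns _ _ _ (hF r₀ _ a a' (Or.inr (notMem_erase u T))
    fun i hi => h i (mem_of_mem_erase hi)) bT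

end NonSignaling

section SideInformation

def achievableEta (X : Type) [Fintype X] (Y : Fin K → Type) [∀ k, Fintype (Y k)]
    (M : Fin K → ℕ) (W : Fin K → Finset (Fin K)) (N : X → (∀ k, Y k) → ℝ)
    (𝒦 : Finset (Fin K)) : Set ℝ :=
  {e | ∃ Z : (∀ i, InA X Y M W 𝒦 i) → (∀ i, OutA X M i) → ℝ,
    IsNSBoxFam Z ∧ e = etaK M W 𝒦 N Z}

variable {X : Type} {Y : Fin K → Type} {M : Fin K → ℕ} {W : Fin K → Finset (Fin K)}

def restrictInputs {𝒦 𝒦' : Finset (Fin K)} (h : 𝒦' ⊆ 𝒦) (a : ∀ i, InA X Y M W 𝒦 i) :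
    ∀ i, InA X Y M W 𝒦' i
  | none => a none
  | some j => ((a (some j)).1, fun j' => (a (some j)).2 ⟨j'.1, j'.2.1, h j'.2.2⟩)

lemma restrictInputs_congr {𝒦 𝒦' : Finset (Fin K)} (h : 𝒦' ⊆ 𝒦) (T : Finset (Option (Fin K)))
    (a a' : ∀ i, InA X Y M W 𝒦 i) (haa' : ∀ i ∈ T, a i = a' i) :
    ∀ i ∈ T, restrictInputs h a i = restrictInputs h a' i := by
  rintro (_ | j) hi <;> dsimp only [restrictInputs] <;> rw [haa' _ hi]

lemma restrictInputs_mkIn {𝒦 𝒦' : Finset (Fin K)} (h : 𝒦' ⊆ 𝒦) (w : ∀ j, Fin (M j))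
    (y : ∀ j, Y j) : restrictInputs h (mkIn (X := X) (W := W) w y) = mkIn w y := by
  funext i
  cases i <;> rfl

lemma achievableEta_mono [Fintype X] [∀ k, Fintype (Y k)] (N : X → (∀ k, Y k) → ℝ)
    {𝒦 𝒦' : Finset (Fin K)} (h : 𝒦' ⊆ 𝒦) :
    achievableEta X Y M W N 𝒦' ⊆ achievableEta X Y M W N 𝒦 := by
  rintro e ⟨Z, hZ, rfl⟩
  refine ⟨_, hZ.comp_input _ (restrictInputs_congr h), ?_⟩
  simp only [etaK, restrictInputs_mkIn]

variable {𝒦 : Finset (Fin K)} {k : Fin K} [NeZero (M k)]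

def padInputs (r : Fin (M k)) (a : ∀ i, InA X Y M W (𝒦.erase k) i) :
    ∀ i, InA X Y M W 𝒦 i
  | none => piPermAt k (Equiv.addRight r) (a none)
  | some j => ((a (some j)).1, fun j' =>
      if hj : j = k then (a none : ∀ j, Fin (M j)) j'.1
      else (a (some j)).2 ⟨j'.1, j'.2.1, mem_erase.2 ⟨hj, j'.2.2⟩⟩)

lemma padInputs_congr (r : Fin (M k)) (T : Finset (Option (Fin K)))
    (a a' : ∀ i, InA X Y M W (𝒦.erase k) i) (hT : none ∈ T ∨ some k ∉ T)
    (haa' : ∀ i ∈ T, a i = a' i) : ∀ i ∈ T, padInputs r a i = padInputs r a' i := by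
  rintro (_ | j) hi
  · dsimp only [padInputs]
    rw [haa' _ hi]
  · by_cases hj : j = k
    · subst hj
      dsimp only [padInputs]
      rw [haa' _ hi, haa' none (hT.resolve_right (not_not.2 hi))]
    · simp only [padInputs, hj, haa' _ hi]
      rfl

lemma padInputs_mkIn (hk : ∀ j, k ∉ W j) (r : Fin (M k)) (w : ∀ j, Fin (M j))
    (y : ∀ j, Y j) :
    padInputs (𝒦 := 𝒦) r (mkIn (X := X) (W := W) w y) =
      mkIn (piPermAt k (Equiv.addRight r) w) y := by
  funext i
  rcases i with _ | j
  · rfl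
  · refine Prod.ext rfl (funext fun j' => ?_)
    have hj' : j'.1 ≠ k := fun h => hk j (h ▸ j'.2.1)
    simp [padInputs, mkIn, hj']

lemma piPermAt_mkOut (r : Fin (M k)) (x : X) (w : ∀ j, Fin (M j)) :
    piPermAt (some k) (Equiv.addRight r : Equiv.Perm (Fin (M k))) (mkOut x w) =
      mkOut x (piPermAt k (Equiv.addRight r) w) := by
  funext i
  rcases i with _ | j
  · rfl
  · by_cases hj : j = k
    · subst hj
      exact (piPermAt_apply_self _ _ _).trans
        (piPermAt_apply_self (B := fun j => Fin (M j)) _ _ w).symm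
    · exact (piPermAt_apply_of_ne (Option.some_injective _ |>.ne hj) _ _).trans
        (piPermAt_apply_of_ne (B := fun j => Fin (M j)) hj _ w).symm

lemma etaK_twirl_padInputs [Fintype X] [∀ k, Fintype (Y k)] (hk : ∀ j, k ∉ W j)
    (N : X → (∀ k, Y k) → ℝ) (Z : (∀ i, InA X Y M W 𝒦 i) → (∀ i, OutA X M i) → ℝ) :
    etaK M W (𝒦.erase k) N
      (twirl padInputs (some k) (fun r => (Equiv.addRight r : Equiv.Perm (Fin (M k)))) Z) =
      etaK M W 𝒦 N Z := by
  have hMk : (M k : ℝ) ≠ 0 := Nat.cast_ne_zero.2 (NeZero.ne _)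
  set g : (∀ j, Fin (M j)) → ℝ := fun w => ∑ x, ∑ y, N x y * Z (mkIn w y) (mkOut x w)
  unfold etaK
  congr 1
  simp only [twirl, padInputs_mkIn hk, piPermAt_mkOut, Fintype.card_fin]
  calc _ = (M k : ℝ)⁻¹ * ∑ r : Fin (M k), ∑ w, g (piPermAt k (Equiv.addRight r) w) := by
        simp only [g, mul_sum]
        symm
        rw [sum_comm]
        refine sum_congr rfl fun w _ => ?_
        rw [sum_comm]
        refine sum_congr rfl fun x _ => ?_
        rw [sum_comm]
        exact sum_congr rfl fun y _ => sum_congr rfl fun r _ => by ring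
    _ = ∑ w, g w := by
        simp only [Equiv.sum_comp, sum_const, card_univ, Fintype.card_fin, nsmul_eq_mul]
        field_simp

lemma achievableEta_subset_erase [Fintype X] [∀ k, Fintype (Y k)] (hk : ∀ j, k ∉ W j)
    (N : X → (∀ k, Y k) → ℝ) :
    achievableEta X Y M W N 𝒦 ⊆ achievableEta X Y M W N (𝒦.erase k) := by
  rintro e ⟨Z, hZ, rfl⟩
  refine ⟨_, isNSBoxFam_twirl hZ (t := none) padInputs_congr ?_ ?_,
    (etaK_twirl_padInputs hk N Z).symm⟩
  · rintro r r' a (_ | j) hj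
    · exact absurd rfl hj
    · rfl
  · exact fun x => (Equiv.addLeft (G := Fin (M k)) x).bijective

end SideInformation

theorem stmt7_general (X : Type) [Fintype X] (Y : Fin K → Type) [∀ k, Fintype (Y k)]
    (M : Fin K → ℕ) (hM : ∀ k, 0 < M k)
    (N : X → (∀ k, Y k) → ℝ)
    (W : Fin K → Finset (Fin K))
    (k : Fin K) (hk : ∀ j, k ∉ W j) :
    etaStarK X Y M W N Finset.univ = etaStarK X Y M W N (Finset.univ \ {k}) := by
  have : NeZero (M k) := ⟨(hM k).ne'⟩
  rw [sdiff_singleton_eq_erase]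
  exact congrArg sSup ((achievableEta_subset_erase hk N).antisymm
    (achievableEta_mono N (erase_subset k univ)))

/-- if no user has `W_k` as side information, then removing user `k`'s
own side information does not change the optimal NS-assisted joint success
probability. -/
theorem stmt7 (X : Type) [Fintype X] (Y : Fin K → Type) [∀ k, Fintype (Y k)]
    (M : Fin K → ℕ) (hM : ∀ k, 0 < M k)
    (N : X → (∀ k, Y k) → ℝ) (hN : IsKUserKernel N)
    (W : Fin K → Finset (Fin K)) (hW : ∀ k, k ∉ W k)
    (k : Fin K) (hk : ∀ j, k ∉ W j) :
    etaStarK X Y M W N Finset.univ = etaStarK X Y M W N (Finset.univ \ {k}) :=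
  stmt7_general X Y M hM N W k hk
end
end

section
/- For every channel with state (N, P_S) on finite alphabets and every NS-assisted coding scheme Z with message set {1,...,M}, the induced joint distribution p(s,x,y) = (1/M) Σ_w P_S(s) Z_T(x|w,s) N(y|x,s) satisfies I(X;Y|S) ≥ η(Z)·log₂ M − H_b(η(Z)), where Z_T(x|w,s) = Σ_ŵ Z(x,ŵ|(w,s),y) is the transmitter marginal (which is independent of y by the non-signaling property). -/
/-!
`I(X;Y|S)` is the relative entropy of `p` from the coupling `p(s,x) p(s,y) / p(s)`, under which
`X` and `Y` are conditionally independent given `S`. The decoder's success, seen as a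
`[0,1]`-valued test `T(s,x,y)`, has probability `η` under `p` and exactly `1/M` under the
coupling: there `y` is drawn independently of `x` given `s`, and since the receiver's marginal
cannot depend on the transmitter's input, `∑_x ∑_w Z(x, w | (w,s), y) = 1` for every `(s, y)`.
The log-sum inequality, applied to the test and to its complement, bounds the relative entropy
below by the binary divergence `d(η ‖ 1/M) ≥ η log₂ M - H_b(η)`.
-/

open scoped BigOperators Classical
open Finset Filter

noncomputable section

/-- Conditional mutual information `I(X;Y|S)` (base 2) of a joint pmf `p(s,x,y)`. -/
def condMI {S X Y : Type*} [Fintype S] [Fintype X] [Fintype Y] (p : S → X → Y → ℝ) : ℝ :=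
  ∑ s, ∑ x, ∑ y,
    if p s x y = 0 then 0 else
      p s x y * Real.logb 2 (((∑ x', ∑ y', p s x' y') * p s x y) /
        ((∑ y', p s x y') * (∑ x', p s x' y)))

/-- Binary entropy function (base 2), with the `0·log₂ 0 = 0` convention. -/
def Hb (t : ℝ) : ℝ :=
  -(t * Real.logb 2 t) - (1 - t) * Real.logb 2 (1 - t)

open Real

section LogSum

variable {ι : Type*}

theorem mul_log_le_mul_log_div_add {a b c : ℝ} (ha : 0 ≤ a) (hb : 0 ≤ b) (hab : b = 0 → a = 0)
    (hc : 0 < c) : a * log c ≤ a * log (a / b) + (c * b - a) := by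
  rcases ha.eq_or_lt with rfl | ha
  · simpa using mul_nonneg hc.le hb
  have hb : 0 < b := hb.lt_of_ne fun h => ha.ne' (hab h.symm)
  have hlog : log c - log (a / b) = log (c * b / a) := by
    rw [← log_div hc.ne' (by positivity), div_div_eq_mul_div]
  have := mul_le_mul_of_nonneg_left (log_le_sub_one_of_pos (by positivity : 0 < c * b / a)) ha.le
  rw [← hlog] at this
  field_simp at this ⊢
  linarith

/-- The log-sum inequality. -/
theorem sum_mul_log_div_sum_le (s : Finset ι) {a b : ι → ℝ} (ha : ∀ i ∈ s, 0 ≤ a i)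
    (hb : ∀ i ∈ s, 0 ≤ b i) (hab : ∀ i ∈ s, b i = 0 → a i = 0) :
    (∑ i ∈ s, a i) * log ((∑ i ∈ s, a i) / ∑ i ∈ s, b i) ≤ ∑ i ∈ s, a i * log (a i / b i) := by
  rcases (Finset.sum_nonneg ha).eq_or_lt with hA | hA
  · rw [← hA, zero_mul]
    rw [eq_comm, Finset.sum_eq_zero_iff_of_nonneg ha] at hA
    exact (Finset.sum_eq_zero fun i hi => by rw [hA i hi, zero_mul]).ge
  have hB : 0 < ∑ i ∈ s, b i := by
    refine (Finset.sum_nonneg hb).lt_of_ne fun hB => hA.ne' ?_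
    rw [eq_comm, Finset.sum_eq_zero_iff_of_nonneg hb] at hB
    exact Finset.sum_eq_zero fun i hi => hab i hi (hB i hi)
  calc (∑ i ∈ s, a i) * log ((∑ i ∈ s, a i) / ∑ i ∈ s, b i)
      ≤ ∑ i ∈ s, (a i * log (a i / b i) + ((∑ i ∈ s, a i) / (∑ i ∈ s, b i) * b i - a i)) := by
        rw [Finset.sum_mul]
        exact Finset.sum_le_sum fun i hi =>
          mul_log_le_mul_log_div_add (ha i hi) (hb i hi) (hab i hi) (by positivity)
    _ = ∑ i ∈ s, a i * log (a i / b i) := by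
        rw [Finset.sum_add_distrib, Finset.sum_sub_distrib, ← Finset.mul_sum,
          div_mul_cancel₀ _ hB.ne', sub_self, add_zero]

theorem sum_mul_log_div_ge_of_test (s : Finset ι) {p r T : ι → ℝ} (hp : ∀ i ∈ s, 0 ≤ p i)
    (hr : ∀ i ∈ s, 0 ≤ r i) (hpr : ∀ i ∈ s, r i = 0 → p i = 0) (hT0 : ∀ i ∈ s, 0 ≤ T i)
    (hT1 : ∀ i ∈ s, T i ≤ 1) :
    (∑ i ∈ s, p i * T i) * log ((∑ i ∈ s, p i * T i) / ∑ i ∈ s, r i * T i) +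
      (∑ i ∈ s, p i * (1 - T i)) *
        log ((∑ i ∈ s, p i * (1 - T i)) / ∑ i ∈ s, r i * (1 - T i))
      ≤ ∑ i ∈ s, p i * log (p i / r i) := by
  have split (t : ℝ) (i : ι) :
      p i * t * log (p i * t / (r i * t)) = t * (p i * log (p i / r i)) := by
    rcases eq_or_ne t 0 with rfl | ht
    · simp
    · rw [mul_div_mul_right _ _ ht]; ring
  have hpr' (t : ℝ) (i : ι) (hi : i ∈ s) : r i * t = 0 → p i * t = 0 := by
    simp only [mul_eq_zero]; exact Or.imp_left (hpr i hi)
  calc _ ≤ ∑ i ∈ s, p i * T i * log (p i * T i / (r i * T i)) +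
        ∑ i ∈ s, p i * (1 - T i) * log (p i * (1 - T i) / (r i * (1 - T i))) := by
        gcongr
        · exact sum_mul_log_div_sum_le s (fun i hi => mul_nonneg (hp i hi) (hT0 i hi))
            (fun i hi => mul_nonneg (hr i hi) (hT0 i hi)) (fun i hi => hpr' _ i hi)
        · exact sum_mul_log_div_sum_le s
            (fun i hi => mul_nonneg (hp i hi) (sub_nonneg.2 (hT1 i hi)))
            (fun i hi => mul_nonneg (hr i hi) (sub_nonneg.2 (hT1 i hi))) (fun i hi => hpr' _ i hi)
    _ = ∑ i ∈ s, p i * log (p i / r i) := by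
        simp only [split, ← Finset.sum_add_distrib, ← add_mul, add_sub_cancel, one_mul]

end LogSum

section BinaryTest

theorem mul_log_le_mul_log_div {x y : ℝ} (hx0 : 0 ≤ x) (hx1 : x ≤ 1) (hy0 : 0 ≤ y)
    (hy1 : y ≤ 1) : x * log x ≤ x * log (x / y) := by
  rcases hx0.eq_or_lt with rfl | hx
  · simp
  rcases hy0.eq_or_lt with rfl | hy
  · simpa using mul_log_nonpos hx0 hx1
  rw [log_div hx.ne' hy.ne']
  exact mul_le_mul_of_nonneg_left (by linarith [log_nonpos hy0 hy1]) hx0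

theorem mul_log_inv_sub_binEntropy_le {α β : ℝ} (hα0 : 0 ≤ α) (hα1 : α ≤ 1) (hβ0 : 0 < β)
    (hβ1 : β ≤ 1) :
    α * log β⁻¹ - binEntropy α ≤ α * log (α / β) + (1 - α) * log ((1 - α) / (1 - β)) := by
  have hα : α * log (α / β) = α * log β⁻¹ - α * log α⁻¹ := by
    rcases hα0.eq_or_lt with rfl | hα
    · simp
    rw [div_eq_mul_inv, log_mul hα.ne' (inv_ne_zero hβ0.ne')]
    simp only [log_inv]
    ring
  have h1α := mul_log_le_mul_log_div (sub_nonneg.2 hα1) (by linarith) (sub_nonneg.2 hβ1)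
    (by linarith)
  rw [binEntropy, log_inv (1 - α)]
  linarith

variable {ι : Type*}

theorem mul_log_inv_sub_binEntropy_le_sum_mul_log_div (s : Finset ι) {p r T : ι → ℝ}
    (hp : ∀ i ∈ s, 0 ≤ p i) (hr : ∀ i ∈ s, 0 ≤ r i) (hpr : ∀ i ∈ s, r i = 0 → p i = 0)
    (hT0 : ∀ i ∈ s, 0 ≤ T i) (hT1 : ∀ i ∈ s, T i ≤ 1) (hp1 : ∑ i ∈ s, p i = 1)
    (hr1 : ∑ i ∈ s, r i = 1) (hβ : 0 < ∑ i ∈ s, r i * T i) :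
    (∑ i ∈ s, p i * T i) * log (∑ i ∈ s, r i * T i)⁻¹ - binEntropy (∑ i ∈ s, p i * T i)
      ≤ ∑ i ∈ s, p i * log (p i / r i) := by
  have hreject (q : ι → ℝ) (hq : ∑ i ∈ s, q i = 1) :
      ∑ i ∈ s, q i * (1 - T i) = 1 - ∑ i ∈ s, q i * T i := by
    simp only [mul_sub, mul_one, Finset.sum_sub_distrib, hq]
  have hle (q : ι → ℝ) (hq0 : ∀ i ∈ s, 0 ≤ q i) (hq : ∑ i ∈ s, q i = 1) :
      ∑ i ∈ s, q i * T i ≤ 1 :=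
    hq ▸ Finset.sum_le_sum fun i hi => mul_le_of_le_one_right (hq0 i hi) (hT1 i hi)
  have htest := sum_mul_log_div_ge_of_test s hp hr hpr hT0 hT1
  rw [hreject p hp1, hreject r hr1] at htest
  exact (mul_log_inv_sub_binEntropy_le (Finset.sum_nonneg fun i hi => mul_nonneg (hp i hi)
    (hT0 i hi)) (hle p hp hp1) hβ (hle r hr hr1)).trans htest

end BinaryTest

theorem Hb_eq_binEntropy_div_log_two (t : ℝ) : Hb t = binEntropy t / log 2 := by
  simp only [Hb, binEntropy, logb, log_inv]
  ring

section CondMI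

variable {S X Y : Type*} [Fintype X] [Fintype Y]

def condIndepCoupling (p : S → X → Y → ℝ) (s : S) (x : X) (y : Y) : ℝ :=
  (∑ y', p s x y') * (∑ x', p s x' y) / ∑ x', ∑ y', p s x' y'

theorem condMI_eq_sum_mul_log_div [Fintype S] (p : S → X → Y → ℝ) :
    condMI p = (∑ s, ∑ x, ∑ y, p s x y * log (p s x y / condIndepCoupling p s x y)) / log 2 := by
  simp only [condMI, Finset.sum_div]
  refine Finset.sum_congr rfl fun s _ => Finset.sum_congr rfl fun x _ =>
    Finset.sum_congr rfl fun y _ => ?_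
  split_ifs with h
  · simp [h]
  · rw [logb, condIndepCoupling, div_div_eq_mul_div, mul_comm (p s x y) (∑ x', ∑ y', p s x' y')]
    exact (mul_div_assoc _ _ _).symm

theorem condIndepCoupling_nonneg {p : S → X → Y → ℝ} (hp : ∀ s x y, 0 ≤ p s x y) (s : S) (x : X)
    (y : Y) : 0 ≤ condIndepCoupling p s x y :=
  div_nonneg (mul_nonneg (Finset.sum_nonneg fun y' _ => hp s x y')
    (Finset.sum_nonneg fun x' _ => hp s x' y))
    (Finset.sum_nonneg fun x' _ => Finset.sum_nonneg fun y' _ => hp s x' y')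

theorem sum_condIndepCoupling (p : S → X → Y → ℝ) (s : S) :
    ∑ x, ∑ y, condIndepCoupling p s x y = ∑ x, ∑ y, p s x y := by
  simp only [condIndepCoupling, ← Finset.sum_div, ← Finset.sum_mul_sum]
  rw [Finset.sum_comm (f := fun y x => p s x y), mul_self_div_self]

theorem eq_zero_of_condIndepCoupling_eq_zero {p : S → X → Y → ℝ} (hp : ∀ s x y, 0 ≤ p s x y)
    {s : S} {x : X} {y : Y} (h : condIndepCoupling p s x y = 0) : p s x y = 0 := by
  have hpy (x : X) : ∑ y', p s x y' = 0 → p s x y = 0 := fun h =>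
    (Finset.sum_eq_zero_iff_of_nonneg fun y' _ => hp s x y').1 h y (Finset.mem_univ y)
  rcases div_eq_zero_iff.1 h with h | h
  · rcases mul_eq_zero.1 h with h | h
    · exact hpy x h
    · exact (Finset.sum_eq_zero_iff_of_nonneg fun x' _ => hp s x' y).1 h x (Finset.mem_univ x)
  · refine hpy x ((Finset.sum_eq_zero_iff_of_nonneg fun x' _ => ?_).1 h x (Finset.mem_univ x))
    exact Finset.sum_nonneg fun y' _ => hp s x' y'

theorem mul_logb_inv_sub_Hb_le_condMI [Fintype S] {p T : S → X → Y → ℝ}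
    (hp : ∀ s x y, 0 ≤ p s x y) (hp1 : ∑ s, ∑ x, ∑ y, p s x y = 1) (hT0 : ∀ s x y, 0 ≤ T s x y)
    (hT1 : ∀ s x y, T s x y ≤ 1)
    (hβ : 0 < ∑ s, ∑ x, ∑ y, condIndepCoupling p s x y * T s x y) :
    (∑ s, ∑ x, ∑ y, p s x y * T s x y) *
        logb 2 (∑ s, ∑ x, ∑ y, condIndepCoupling p s x y * T s x y)⁻¹ -
      Hb (∑ s, ∑ x, ∑ y, p s x y * T s x y) ≤ condMI p := by
  have h := mul_log_inv_sub_binEntropy_le_sum_mul_log_div (Finset.univ : Finset (S × X × Y))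
    (p := fun i => p i.1 i.2.1 i.2.2) (r := fun i => condIndepCoupling p i.1 i.2.1 i.2.2)
    (T := fun i => T i.1 i.2.1 i.2.2) (fun i _ => hp _ _ _)
    (fun i _ => condIndepCoupling_nonneg hp _ _ _)
    (fun i _ => eq_zero_of_condIndepCoupling_eq_zero hp) (fun i _ => hT0 _ _ _)
    (fun i _ => hT1 _ _ _)
    (by simpa only [Fintype.sum_prod_type] using hp1)
    (by simpa only [Fintype.sum_prod_type, sum_condIndepCoupling] using hp1)
    (by simpa only [Fintype.sum_prod_type] using hβ)
  simp only [Fintype.sum_prod_type] at h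
  rw [condMI_eq_sum_mul_log_div, Hb_eq_binEntropy_div_log_two, logb, mul_div_assoc', ← sub_div]
  exact div_le_div_of_nonneg_right h (log_nonneg one_le_two)

end CondMI

section Channel

variable {S X Y : Type*} [Fintype Y] {PS : S → ℝ} {Q : S → X → ℝ}
  {N : X → S → Y → ℝ}

theorem sum_mul_channel (hN : ∀ x s, ∑ y, N x s y = 1) (s : S) (x : X) :
    ∑ y, PS s * Q s x * N x s y = PS s * Q s x := by
  rw [← Finset.mul_sum, hN, mul_one]

theorem sum_sum_mul_channel [Fintype X] (hN : ∀ x s, ∑ y, N x s y = 1)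
    (hQ : ∀ s, ∑ x, Q s x = 1) (s : S) :
    ∑ x, ∑ y, PS s * Q s x * N x s y = PS s := by
  simp only [sum_mul_channel hN, ← Finset.mul_sum, hQ, mul_one]

theorem condIndepCoupling_channel [Fintype X] (hN : ∀ x s, ∑ y, N x s y = 1)
    (hQ : ∀ s, ∑ x, Q s x = 1) (s : S) (x : X) (y : Y) :
    condIndepCoupling (fun s x y => PS s * Q s x * N x s y) s x y =
      PS s * Q s x * ∑ x', Q s x' * N x' s y := by
  have hSY : ∑ x', PS s * Q s x' * N x' s y = PS s * ∑ x', Q s x' * N x' s y := by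
    simp only [Finset.mul_sum, mul_assoc]
  rw [condIndepCoupling, sum_mul_channel hN, sum_sum_mul_channel hN hQ, hSY]
  rcases eq_or_ne (PS s) 0 with h | h
  · simp [h]
  · field_simp

end Channel

theorem IsNSBox.sum_sum_comp_eq_one {A1 A2 B1 B2 : Type*} [Fintype B1] [Fintype B2]
    [Nonempty A1] {Z : A1 → A2 → B1 → B2 → ℝ} (hZ : IsNSBox Z) (f : B2 → A1) (a2 : A2) :
    ∑ b1, ∑ b2, Z (f b2) a2 b1 b2 = 1 := by
  let a1 : A1 := Classical.arbitrary A1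
  calc ∑ b1, ∑ b2, Z (f b2) a2 b1 b2 = ∑ b2, ∑ b1, Z (f b2) a2 b1 b2 := Finset.sum_comm
    _ = ∑ b2, ∑ b1, Z a1 a2 b1 b2 := Finset.sum_congr rfl fun b2 _ => hZ.2.2.2 (f b2) a1 a2 b2
    _ = 1 := by rw [Finset.sum_comm, hZ.2.1]

section CodingScheme

variable {X S Y : Type*} {M : ℕ}
  {Z : (Fin M × S) → Y → X → Fin M → ℝ} {ZT : Fin M → S → X → ℝ}

def inputDist (M : ℕ) (ZT : Fin M → S → X → ℝ) (s : S) (x : X) : ℝ :=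
  (M : ℝ)⁻¹ * ∑ w, ZT w s x

/-- The conditional probability, given `(s, x, y)`, that the receiver decodes correctly. -/
def successTest (Z : (Fin M × S) → Y → X → Fin M → ℝ) (ZT : Fin M → S → X → ℝ) (s : S) (x : X)
    (y : Y) : ℝ :=
  (∑ w, Z (w, s) y x w) / ∑ w, ZT w s x

theorem le_transmitterMarginal [Fintype X] (hZ : IsNSBox Z)
    (hZT : ∀ w s y x, ZT w s x = ∑ wh, Z (w, s) y x wh) (w : Fin M) (s : S) (y : Y) (x : X) :
    Z (w, s) y x w ≤ ZT w s x := by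
  rw [hZT w s y x]
  exact Finset.single_le_sum (fun wh _ => hZ.1 _ y x wh) (Finset.mem_univ w)

theorem inputDist_nonneg [Fintype X] [Nonempty Y] (hZ : IsNSBox Z)
    (hZT : ∀ w s y x, ZT w s x = ∑ wh, Z (w, s) y x wh) (s : S) (x : X) :
    0 ≤ inputDist M ZT s x :=
  mul_nonneg (by positivity) (Finset.sum_nonneg fun w _ =>
    (hZ.1 _ _ _ _).trans (le_transmitterMarginal hZ hZT w s (Classical.arbitrary Y) x))

theorem sum_inputDist [Fintype X] [Nonempty Y] (hZ : IsNSBox Z)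
    (hZT : ∀ w s y x, ZT w s x = ∑ wh, Z (w, s) y x wh) (hM : M ≠ 0) (s : S) :
    ∑ x, inputDist M ZT s x = 1 := by
  have hw (w : Fin M) : ∑ x, ZT w s x = 1 := by
    simp only [hZT w s (Classical.arbitrary Y), hZ.2.1]
  simp only [inputDist, ← Finset.mul_sum]
  rw [Finset.sum_comm]
  simp [hw, hM]

theorem successTest_nonneg [Fintype X] (hZ : IsNSBox Z)
    (hZT : ∀ w s y x, ZT w s x = ∑ wh, Z (w, s) y x wh) (s : S) (x : X) (y : Y) :
    0 ≤ successTest Z ZT s x y :=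
  div_nonneg (Finset.sum_nonneg fun _ _ => hZ.1 _ _ _ _) (Finset.sum_nonneg fun w _ =>
    (hZ.1 _ _ _ _).trans (le_transmitterMarginal hZ hZT w s y x))

theorem successTest_le_one [Fintype X] (hZ : IsNSBox Z)
    (hZT : ∀ w s y x, ZT w s x = ∑ wh, Z (w, s) y x wh) (s : S) (x : X) (y : Y) :
    successTest Z ZT s x y ≤ 1 :=
  div_le_one_of_le₀ (Finset.sum_le_sum fun w _ => le_transmitterMarginal hZ hZT w s y x)
    (Finset.sum_nonneg fun w _ => (hZ.1 _ _ _ _).trans (le_transmitterMarginal hZ hZT w s y x))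

theorem inputDist_mul_successTest [Fintype X] (hZ : IsNSBox Z)
    (hZT : ∀ w s y x, ZT w s x = ∑ wh, Z (w, s) y x wh) (s : S) (x : X) (y : Y) :
    inputDist M ZT s x * successTest Z ZT s x y = (M : ℝ)⁻¹ * ∑ w, Z (w, s) y x w := by
  rw [inputDist, successTest, mul_assoc]
  rcases eq_or_ne (∑ w, ZT w s x) 0 with h | h
  · have hV : ∑ w, Z (w, s) y x w = 0 := le_antisymm
      (h ▸ Finset.sum_le_sum fun w _ => le_transmitterMarginal hZ hZT w s y x)
      (Finset.sum_nonneg fun w _ => hZ.1 _ _ _ _)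
    simp [hV]
  · rw [mul_div_cancel₀ _ h]

end CodingScheme

section StateChannelCoding

variable {X S Y : Type*} [Fintype X] [Fintype S] [Fintype Y] {M : ℕ}
  {Z : (Fin M × S) → Y → X → Fin M → ℝ} {ZT : Fin M → S → X → ℝ}

theorem sum_mul_successTest_eq_etaCWS (N : X → S → Y → ℝ) (PS : S → ℝ) (hZ : IsNSBox Z)
    (hZT : ∀ w s y x, ZT w s x = ∑ wh, Z (w, s) y x wh) :
    ∑ s, ∑ x, ∑ y, PS s * inputDist M ZT s x * N x s y * successTest Z ZT s x y =
      etaCWS M N PS Z := by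
  have h (s : S) (x : X) (y : Y) :
      PS s * inputDist M ZT s x * N x s y * successTest Z ZT s x y =
        (M : ℝ)⁻¹ * (PS s * N x s y * ∑ w, Z (w, s) y x w) := by
    rw [mul_right_comm (PS s), mul_assoc, inputDist_mul_successTest hZ hZT]
    ring
  simp only [h, etaCWS, Finset.mul_sum]
  rw [Finset.sum_comm (γ := Fin M)]
  refine Finset.sum_congr rfl fun s _ => ?_
  rw [Finset.sum_comm (γ := Fin M)]
  refine Finset.sum_congr rfl fun x _ => ?_
  exact Finset.sum_comm

theorem sum_condIndepCoupling_mul_successTest [Nonempty Y] {N : X → S → Y → ℝ} {PS : S → ℝ}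
    (hN : ∀ x s, ∑ y, N x s y = 1) (hPS : ∑ s, PS s = 1) (hZ : IsNSBox Z)
    (hZT : ∀ w s y x, ZT w s x = ∑ wh, Z (w, s) y x wh) (hM : M ≠ 0) :
    ∑ s, ∑ x, ∑ y, condIndepCoupling (fun s x y => PS s * inputDist M ZT s x * N x s y) s x y *
      successTest Z ZT s x y = (M : ℝ)⁻¹ := by
  have hQ := sum_inputDist hZ hZT hM
  have hY (s : S) : ∑ y, ∑ x, inputDist M ZT s x * N x s y = 1 := by
    rw [Finset.sum_comm]
    simp only [← Finset.mul_sum, hN, mul_one, hQ]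
  have hsuccess (s : S) (y : Y) : ∑ x, ∑ w, Z (w, s) y x w = 1 :=
    haveI : Nonempty (Fin M × S) := ⟨(⟨0, Nat.pos_of_ne_zero hM⟩, s)⟩
    hZ.sum_sum_comp_eq_one (fun w => (w, s)) y
  have hterm (s : S) (x : X) (y : Y) :
      condIndepCoupling (fun s x y => PS s * inputDist M ZT s x * N x s y) s x y *
          successTest Z ZT s x y =
        PS s * (∑ x', inputDist M ZT s x' * N x' s y) * ((M : ℝ)⁻¹ * ∑ w, Z (w, s) y x w) := by
    rw [condIndepCoupling_channel hN hQ, ← inputDist_mul_successTest hZ hZT]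
    ring
  calc _ = ∑ s, ∑ y, PS s * (∑ x', inputDist M ZT s x' * N x' s y) *
        ((M : ℝ)⁻¹ * ∑ x, ∑ w, Z (w, s) y x w) := by
        refine Finset.sum_congr rfl fun s _ => ?_
        rw [Finset.sum_comm]
        simp only [hterm, ← Finset.mul_sum]
    _ = (M : ℝ)⁻¹ := by
        simp only [hsuccess, mul_one, ← Finset.sum_mul, ← Finset.mul_sum, hY, hPS, one_mul]

end StateChannelCoding

/-- NS Fano inequality for channels with state: for any NS-assisted
coding scheme `Z`, the induced joint distribution
`p(s,x,y) = (1/M) Σ_w P_S(s)·Z_T(x|w,s)·N(y|x,s)` satisfies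
`I(X;Y|S) ≥ η(Z)·log₂ M − H_b(η(Z))`, where `Z_T` is the transmitter marginal of `Z`. -/
theorem stmt9 {X S Y : Type*} [Fintype X] [Fintype S] [Fintype Y]
    (N : X → S → Y → ℝ) (hN : IsStateKernel N) (PS : S → ℝ) (hPS : IsPMF PS)
    (M : ℕ) (Z : (Fin M × S) → Y → X → Fin M → ℝ) (hZ : IsNSBox Z)
    (ZT : Fin M → S → X → ℝ)
    (hZT : ∀ w s y x, ZT w s x = ∑ wh, Z (w, s) y x wh) :
    etaCWS M N PS Z * Real.logb 2 M - Hb (etaCWS M N PS Z)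
      ≤ condMI (fun s x y => (M : ℝ)⁻¹ * ∑ w, PS s * ZT w s x * N x s y) := by
  rcases isEmpty_or_nonempty Y with hY | hY
  · simp [etaCWS, condMI, Hb]
  rcases eq_or_ne M 0 with rfl | hM
  · simp [etaCWS, condMI, Hb]
  have hp : (fun s x y => (M : ℝ)⁻¹ * ∑ w, PS s * ZT w s x * N x s y) =
      fun s x y => PS s * inputDist M ZT s x * N x s y := by
    ext s x y
    simp only [inputDist, Finset.mul_sum, Finset.sum_mul]
    exact Finset.sum_congr rfl fun w _ => by ring
  have hβ := sum_condIndepCoupling_mul_successTest hN.2 hPS.2 hZ hZT hM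
  have h := mul_logb_inv_sub_Hb_le_condMI (T := successTest Z ZT)
    (fun s x y => mul_nonneg (mul_nonneg (hPS.1 s) (inputDist_nonneg hZ hZT s x)) (hN.1 x s y))
    (by simp only [sum_sum_mul_channel hN.2 (sum_inputDist hZ hZT hM), hPS.2])
    (successTest_nonneg hZ hZT) (successTest_le_one hZ hZT) (by rw [hβ]; positivity)
  rwa [hβ, inv_inv, sum_mul_successTest_eq_etaCWS N PS hZ hZT, ← hp] at h
end
end

section
/- Let Z(x, ŵ | (w,s), y) be a bipartite non-signaling box with transmitter input alphabet {1,...,M} × S and output alphabet X, and receiver input alphabet Y and output alphabet {1,...,M}. Then for every state s ∈ S and every probability mass function Q on Y (the 'broken channel'), the probability of correct decoding equals exactly 1/M: (1/M) Σ_{w∈{1,...,M}} Σ_{x∈X} Σ_{y∈Y} Q(y) · Z(x, w | (w,s), y) = 1/M. -/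
open scoped BigOperators Classical
open Finset Filter

noncomputable section

/- Party 2's output distribution does not depend on party 1's input, so choosing that input
as a function of party 2's own output still leaves a total mass of one. -/
theorem IsNSBox.sum_marginal_right_comp_eq_one {A1 A2 B1 B2 : Type*} [Fintype B1] [Fintype B2]
    [Nonempty A1] {Z : A1 → A2 → B1 → B2 → ℝ} (hZ : IsNSBox Z) (g : B2 → A1) (a2 : A2) :
    ∑ b2, ∑ b1, Z (g b2) a2 b1 b2 = 1 := by
  obtain ⟨a1⟩ := ‹Nonempty A1›
  calc ∑ b2, ∑ b1, Z (g b2) a2 b1 b2 = ∑ b2, ∑ b1, Z a1 a2 b1 b2 :=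
        sum_congr rfl fun b2 _ => hZ.2.2.2 (g b2) a1 a2 b2
    _ = 1 := by rw [sum_comm, hZ.2.1 a1 a2]

theorem stmt15_general {X Y S : Type*} [Fintype X] [Fintype Y] (M : ℕ)
    (Z : (Fin M × S) → Y → X → Fin M → ℝ) (hZ : IsNSBox Z)
    (s : S) (Q : Y → ℝ) (hQ : IsPMF Q) :
    (M : ℝ)⁻¹ * ∑ w, ∑ x, ∑ y, Q y * Z (w, s) y x w = (M : ℝ)⁻¹ := by
  rcases Nat.eq_zero_or_pos M with rfl | hM
  · simp
  have : Nonempty (Fin M × S) := ⟨(⟨0, hM⟩, s)⟩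
  suffices ∑ w, ∑ x, ∑ y, Q y * Z (w, s) y x w = 1 by rw [this, mul_one]
  calc ∑ w, ∑ x, ∑ y, Q y * Z (w, s) y x w = ∑ w, ∑ y, ∑ x, Q y * Z (w, s) y x w :=
        sum_congr rfl fun w _ => sum_comm
    _ = ∑ y, Q y * ∑ w, ∑ x, Z (w, s) y x w := by rw [sum_comm]; simp only [mul_sum]
    _ = ∑ y, Q y := by
        simp only [hZ.sum_marginal_right_comp_eq_one (fun w => (w, s)), mul_one]
    _ = 1 := hQ.2

/-- broken channel: for a bipartite non-signaling coding box, if the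
channel is replaced by an arbitrary output distribution `Q` (independent of the input),
then for every state `s` the probability of correct decoding is exactly `1/M`. -/
theorem stmt15 {X Y S : Type*} [Fintype X] [Fintype Y] [Fintype S] (M : ℕ)
    (Z : (Fin M × S) → Y → X → Fin M → ℝ) (hZ : IsNSBox Z)
    (s : S) (Q : Y → ℝ) (hQ : IsPMF Q) :
    (M : ℝ)⁻¹ * ∑ w, ∑ x, ∑ y, Q y * Z (w, s) y x w = (M : ℝ)⁻¹ :=
  stmt15_general M Z hZ s Q hQ
end
end

section
/- Let Z(x, ŵ1, ŵ2 | (w1,w2), y1, y2) be a tripartite non-signaling box where the transmitter has input (w1,w2) ∈ {1,...,M1} × {1,...,M2} and output x ∈ X, and user k ∈ {1,2} has input y_k ∈ Y_k and output ŵ_k ∈ {1,...,M_k}. Then for every w2 ∈ {1,...,M2} and every probability mass function Q on Y1 × Y2 (the 'broken channel'), the probability of user 1 decoding correctly equals exactly 1/M1: (1/M1) Σ_{w1,ŵ2,y1,y2} Q(y1,y2) · [Σ_x Z(x, w1, ŵ2 | (w1,w2), y1, y2)] = 1/M1. -/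
/-!
Transmitter non-signaling makes the marginal `∑ x, Z (w1, w2) y1 y2 x ŵ1 ŵ2` independent of the
message `w1`, so feeding user 1's own guess back in as the message does not change the total
mass: summed over `ŵ1, ŵ2` it is still `1` for every `(y1, y2)`, and averaging against `Q`
gives `1`.
-/

open scoped BigOperators Classical
open Finset Filter

noncomputable section

/-- Tripartite non-signaling box: party `i` has input `a_i` and output `b_i`; for every
subset `T` of the parties, the marginal over the outputs of the parties not in `T`
depends only on the inputs of the parties in `T`. -/
def IsNSBox3 {A0 A1 A2 B0 B1 B2 : Type*} [Fintype B0] [Fintype B1] [Fintype B2]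
    (Z : A0 → A1 → A2 → B0 → B1 → B2 → ℝ) : Prop :=
  (∀ a0 a1 a2 b0 b1 b2, 0 ≤ Z a0 a1 a2 b0 b1 b2) ∧
  (∀ a0 a1 a2, ∑ b0, ∑ b1, ∑ b2, Z a0 a1 a2 b0 b1 b2 = 1) ∧
  (∀ a0 a0' a1 a2 b1 b2, ∑ b0, Z a0 a1 a2 b0 b1 b2 = ∑ b0, Z a0' a1 a2 b0 b1 b2) ∧
  (∀ a0 a1 a1' a2 b0 b2, ∑ b1, Z a0 a1 a2 b0 b1 b2 = ∑ b1, Z a0 a1' a2 b0 b1 b2) ∧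
  (∀ a0 a1 a2 a2' b0 b1, ∑ b2, Z a0 a1 a2 b0 b1 b2 = ∑ b2, Z a0 a1 a2' b0 b1 b2) ∧
  (∀ a0 a0' a1 a1' a2 b2,
    ∑ b0, ∑ b1, Z a0 a1 a2 b0 b1 b2 = ∑ b0, ∑ b1, Z a0' a1' a2 b0 b1 b2) ∧
  (∀ a0 a0' a1 a2 a2' b1,
    ∑ b0, ∑ b2, Z a0 a1 a2 b0 b1 b2 = ∑ b0, ∑ b2, Z a0' a1 a2' b0 b1 b2) ∧
  (∀ a0 a1 a1' a2 a2' b0,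
    ∑ b1, ∑ b2, Z a0 a1 a2 b0 b1 b2 = ∑ b1, ∑ b2, Z a0 a1' a2' b0 b1 b2)

theorem IsNSBox3.sum_input_of_output_eq_one {A0 A1 A2 B0 B1 B2 : Type*} [Nonempty A0]
    [Fintype B0] [Fintype B1] [Fintype B2] {Z : A0 → A1 → A2 → B0 → B1 → B2 → ℝ}
    (hZ : IsNSBox3 Z) (f : B1 → A0) (a1 : A1) (a2 : A2) :
    ∑ b1, ∑ b2, ∑ b0, Z (f b1) a1 a2 b0 b1 b2 = 1 := by
  obtain ⟨-, hnorm, hns0, -⟩ := hZ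
  obtain ⟨a0⟩ := ‹Nonempty A0›
  calc ∑ b1, ∑ b2, ∑ b0, Z (f b1) a1 a2 b0 b1 b2
      = ∑ b1, ∑ b2, ∑ b0, Z a0 a1 a2 b0 b1 b2 := by
        refine sum_congr rfl fun b1 _ => sum_congr rfl fun b2 _ => ?_
        exact hns0 (f b1) a0 a1 a2 b1 b2
    _ = ∑ b0, ∑ b1, ∑ b2, Z a0 a1 a2 b0 b1 b2 := sum_comm_cycle
    _ = 1 := hnorm a0 a1 a2

/-- broken channel, broadcast version: for a tripartite non-signaling
coding box, if the channel is replaced by an arbitrary output distribution `Q` on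
`Y1 × Y2`, then for every `w2` the probability of user 1 decoding correctly is `1/M1`. -/
theorem stmt16 {X Y1 Y2 : Type*} [Fintype X] [Fintype Y1] [Fintype Y2] (M1 M2 : ℕ)
    (Z : (Fin M1 × Fin M2) → Y1 → Y2 → X → Fin M1 → Fin M2 → ℝ) (hZ : IsNSBox3 Z)
    (w2 : Fin M2) (Q : Y1 × Y2 → ℝ) (hQ : IsPMF Q) :
    (M1 : ℝ)⁻¹ * ∑ w1, ∑ wh2, ∑ y1, ∑ y2,
        Q (y1, y2) * ∑ x, Z (w1, w2) y1 y2 x w1 wh2 = (M1 : ℝ)⁻¹ := by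
  rcases M1.eq_zero_or_pos with rfl | hM1
  · simp
  have : Nonempty (Fin M1 × Fin M2) := ⟨(⟨0, hM1⟩, w2)⟩
  suffices ∑ w1, ∑ wh2, ∑ y1, ∑ y2, Q (y1, y2) * ∑ x, Z (w1, w2) y1 y2 x w1 wh2 = 1 by
    rw [this, mul_one]
  calc ∑ w1, ∑ wh2, ∑ y1, ∑ y2, Q (y1, y2) * ∑ x, Z (w1, w2) y1 y2 x w1 wh2
      = ∑ y1, ∑ y2, Q (y1, y2) * ∑ w1, ∑ wh2, ∑ x, Z (w1, w2) y1 y2 x w1 wh2 := by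
        simp only [mul_sum]
        rw [sum_comm_cycle]
        exact sum_congr rfl fun _ _ => sum_comm_cycle
    _ = ∑ y1, ∑ y2, Q (y1, y2) := by
        simp only [hZ.sum_input_of_output_eq_one (fun w1 => (w1, w2)), mul_one]
    _ = 1 := by rw [← Fintype.sum_prod_type']; exact hQ.2
end
end
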